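/- arXiv:1110.0760 — 2 statements merged into one kernel-verified Lean document; each statement's English description precedes it below -/
import Mathlib

section
/- Let w ∈ αΣ* ∩ Σ*‾α be a non-α-crossing word whose set of ‾α-suffixes S_‾α(w) has at least 2 elements, and let u be the longest α-prefix of w. Then |u| + 2|α| ≤ |w|. -/
open List

namespace Hairpin

variable {S : Type} [DecidableEq S]

/-- Antimorphic extension of an involution to words. -/
def comp (bar : S → S) (w : List S) : List S := (w.map bar).reverse

/-- Right hairpin completion w.r.t. primer `a`. -/
def RH (bar : S → S) (a w z : List S) : Prop :=
  ∃ γ β : List S, w = γ ++ a ++ β ++ comp bar a ∧ z = w ++ comp bar γ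

/-- Left hairpin completion w.r.t. primer `a`. -/
def LH (bar : S → S) (a w z : List S) : Prop :=
  ∃ γ β : List S, w = a ++ β ++ comp bar a ++ comp bar γ ∧ z = γ ++ w

/-- One hairpin completion step. -/
def HC (bar : S → S) (a w z : List S) : Prop := RH bar a w z ∨ LH bar a w z

/-- Iterated hairpin completion `H*_α(w)`. -/
def HCstar (bar : S → S) (a w : List S) : Set (List S) :=
  { z | Relation.ReflTransGen (HC bar a) w z }

/-- `w` is non-`a`-crossing: every occurrence of `a` starts no later than
every occurrence of `comp bar a`. -/
def NonCrossing (bar : S → S) (a w : List S) : Prop :=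
  ∀ i j : ℕ, a <+: w.drop i → comp bar a <+: w.drop j → i ≤ j

/-- The set of `a`-prefixes of `w`. -/
def Pa (a w : List S) : Set (List S) := { u | u ++ a <+: w }

/-- The set of `‾a`-suffixes of `w` (the elements are the words `‾v`). -/
def Sa (bar : S → S) (a w : List S) : Set (List S) :=
  { x | comp bar a ++ x <:+ w }

/-- The set of complements of `‾a`-suffixes of `w`, i.e. `‾(S_‾α(w))`. -/
def barSa (bar : S → S) (a w : List S) : Set (List S) :=
  { v | comp bar a ++ comp bar v <:+ w }

/-- Kleene star of a set of words: all finite concatenations. -/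
def star (X : Set (List S)) : Set (List S) :=
  { x | ∃ l : List (List S), (∀ y ∈ l, y ∈ X) ∧ x = l.flatten }

/-- `ind_α(x)`: the number of occurrences of `a` in `x ++ a` other than the
suffix occurrence, i.e. the number of positions `i < |x|` where `a` occurs. -/
def inda (a x : List S) : ℕ :=
  ((Finset.range x.length).filter (fun i => a <+: (x ++ a).drop i)).card

end Hairpin

/-! Let `‾α` occur at positions `t < t + p` (one occurrence per `‾α`-suffix) and `α` at `|u| ≤ t`
(non-crossing). If `|u| + 2|α| > |w|`, the two occurrences of `‾α` overlap, so `‾α` and hence `α`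
have period `p`, and the occurrence of `α` overlaps them by at least `p` letters, so the whole
window from `|u|` to `t + p + |α|` has period `p`. Shifting the occurrence of `α` by a suitable
multiple of `p` then yields an occurrence of `α` to the right of the one of `‾α` at `t`. -/

namespace Hairpin

variable {S : Type}

theorem prefix_drop_iff_getElem? {b w : List S} {n : ℕ} :
    b <+: w.drop n ↔ ∀ i < b.length, w[n + i]? = b[i]? := by
  simp only [prefix_iff_getElem?, getElem?_drop]
  exact forall₂_congr fun i hi => by rw [getElem?_eq_getElem hi]

def PeriodicOn (w : List S) (p lo hi : ℕ) : Prop :=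
  ∀ i, lo ≤ i → i + p < hi → w[i + p]? = w[i]?

abbrev HasPeriod (b : List S) (p : ℕ) : Prop := PeriodicOn b p 0 b.length

namespace HasPeriod

variable {b : List S} {p : ℕ}

theorem reverse (h : HasPeriod b p) : HasPeriod b.reverse p := by
  intro i _ hi
  rw [length_reverse] at hi
  rw [getElem?_reverse (by omega), getElem?_reverse (by omega),
    ← h (b.length - 1 - (i + p)) (Nat.zero_le _) (by omega)]
  congr 1
  omega

theorem map (f : S → S) (h : HasPeriod b p) : HasPeriod (b.map f) p := by
  intro i _ hi
  rw [length_map] at hi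
  simp only [getElem?_map, h i (Nat.zero_le _) hi]

theorem comp (bar : S → S) (h : HasPeriod b p) : HasPeriod (comp bar b) p :=
  (h.map bar).reverse

end HasPeriod

namespace PeriodicOn

variable {w b : List S} {p lo hi : ℕ}

theorem of_prefix_drop_of_prefix_drop (h₀ : b <+: w.drop lo) (hp : b <+: w.drop (lo + p)) :
    PeriodicOn w p lo (lo + p + b.length) := by
  intro i hlo hj
  obtain ⟨j, rfl⟩ := Nat.exists_eq_add_of_le hlo
  rw [prefix_drop_iff_getElem?.1 h₀ j (by omega), add_right_comm,
    prefix_drop_iff_getElem?.1 hp j (by omega)]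

theorem of_prefix_drop (hb : HasPeriod b p) (h : b <+: w.drop lo) :
    PeriodicOn w p lo (lo + b.length) := by
  intro i hlo hj
  obtain ⟨j, rfl⟩ := Nat.exists_eq_add_of_le hlo
  have e := prefix_drop_iff_getElem?.1 h
  rw [e j (by omega), add_assoc, e _ (by omega)]
  exact hb j (Nat.zero_le _) (by omega)

theorem hasPeriod (hw : PeriodicOn w p lo hi) (h : b <+: w.drop lo) (hle : lo + b.length ≤ hi) :
    HasPeriod b p := by
  intro i _ hib
  have e := prefix_drop_iff_getElem?.1 h
  rw [← e _ hib, ← e _ (by omega), ← add_assoc]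
  exact hw _ (Nat.le_add_right _ _) (by omega)

theorem union {lo' hi' : ℕ} (h : PeriodicOn w p lo hi) (h' : PeriodicOn w p lo' hi')
    (hoverlap : lo' + p ≤ hi) : PeriodicOn w p lo hi' := by
  intro i hlo hi_lt
  by_cases hlo' : lo' ≤ i
  · exact h' i hlo' hi_lt
  · exact h i hlo (by omega)

theorem getElem?_add_mul (h : PeriodicOn w p lo hi) {i : ℕ} (hlo : lo ≤ i) :
    ∀ n, i + n * p < hi → w[i + n * p]? = w[i]?
  | 0, _ => by simp
  | n + 1, hn => by
    rw [add_one_mul, ← add_assoc] at hn ⊢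
    rw [h _ (by omega) hn]
    exact getElem?_add_mul h hlo n (by omega)

theorem prefix_drop_add_mul (h : PeriodicOn w p lo hi) (hb : b <+: w.drop lo) {n : ℕ}
    (hn : lo + n * p + b.length ≤ hi) : b <+: w.drop (lo + n * p) := by
  refine prefix_drop_iff_getElem?.2 fun i hi => ?_
  rw [add_right_comm, h.getElem?_add_mul (by omega) n (by omega)]
  exact prefix_drop_iff_getElem?.1 hb i hi

end PeriodicOn

@[simp]
theorem length_comp (bar : S → S) (b : List S) : (comp bar b).length = b.length := by
  simp [comp]

theorem comp_comp {bar : S → S} (hbar : Function.Involutive bar) (b : List S) :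
    comp bar (comp bar b) = b := by
  simp [comp, map_reverse, hbar.comp_self]

theorem length_add_two_mul_le_of_nonCrossing {bar : S → S} (hbar : Function.Involutive bar)
    {a w u x y : List S} (hnc : NonCrossing bar a w) (hu : u ++ a <+: w)
    (hx : comp bar a ++ x <:+ w) (hy : comp bar a ++ y <:+ w) (hxy : x.length < y.length) :
    u.length + 2 * a.length ≤ w.length := by
  obtain ⟨r, hr⟩ := hu
  obtain ⟨s, hs⟩ := hx
  obtain ⟨t, ht⟩ := hy
  have hs_len := congrArg length hs
  have ht_len := congrArg length ht
  simp only [length_append, length_comp] at hs_len ht_len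
  set p := s.length - t.length
  have hu_occ : a <+: w.drop u.length := ⟨r, by rw [← hr, append_assoc, drop_left]⟩
  have ht_occ : comp bar a <+: w.drop t.length := ⟨y, by rw [← ht, drop_left]⟩
  have hs_occ : comp bar a <+: w.drop (t.length + p) :=
    ⟨x, by rw [Nat.add_sub_cancel' (by omega), ← hs, drop_left]⟩
  have hut : u.length ≤ t.length := hnc _ _ hu_occ ht_occ
  by_contra! hlong
  have hcomp_win := PeriodicOn.of_prefix_drop_of_prefix_drop ht_occ hs_occ
  have ha : HasPeriod a p := by
    simpa [comp_comp hbar] using (hcomp_win.hasPeriod ht_occ (by simp)).comp bar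
  have hwin : PeriodicOn w p u.length (t.length + p + a.length) :=
    (PeriodicOn.of_prefix_drop ha hu_occ).union (by simpa using hcomp_win) (by omega)
  -- `n * p` is the least multiple of `p` exceeding `t - |u|`
  set n := (t.length - u.length) / p + 1
  have hn_gt : t.length - u.length < n * p := by
    rw [add_one_mul]; exact Nat.lt_div_mul_add (by omega)
  have hn_le : n * p ≤ t.length - u.length + p := by
    rw [add_one_mul]; exact Nat.add_le_add_right (Nat.div_mul_le_self _ _) p
  have := hnc _ _ (hwin.prefix_drop_add_mul hu_occ (n := n) (by omega)) ht_occ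
  omega

variable [DecidableEq S]

theorem stmt5_general (bar : S → S) (hbar : Function.Involutive bar)
    (a w : List S)
    (hnc : NonCrossing bar a w)
    (hS2 : ∃ x ∈ Sa bar a w, ∃ y ∈ Sa bar a w, x ≠ y)
    (u : List S) (hu : u ∈ Pa a w) :
    u.length + 2 * a.length ≤ w.length := by
  obtain ⟨x, hx, y, hy, hxy⟩ := hS2
  have hx_suffix : x <:+ w := (suffix_append _ x).trans hx
  have hy_suffix : y <:+ w := (suffix_append _ y).trans hy
  have hlen : x.length ≠ y.length := fun h =>
    hxy ((suffix_of_suffix_length_le hx_suffix hy_suffix h.le).eq_of_length h)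
  rcases hlen.lt_or_gt with hlt | hlt
  · exact length_add_two_mul_le_of_nonCrossing hbar hnc hu hx hy hlt
  · exact length_add_two_mul_le_of_nonCrossing hbar hnc hu hy hx hlt

theorem stmt5 (bar : S → S) (hbar : Function.Involutive bar)
    (a w : List S) (ha : a ≠ comp bar a)
    (hp : a <+: w) (hs : comp bar a <:+ w)
    (hnc : NonCrossing bar a w)
    (hS2 : ∃ x ∈ Sa bar a w, ∃ y ∈ Sa bar a w, x ≠ y)
    (u : List S) (hu : u ∈ Pa a w)
    (humax : ∀ x ∈ Pa a w, x.length ≤ u.length) :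
    u.length + 2 * a.length ≤ w.length :=
  stmt5_general bar hbar a w hnc hS2 u hu

end Hairpin
end

section
/- Let w ∈ αΣ* ∩ Σ*‾α, let u ∈ P_α(w) and ‾v ∈ S_‾α(w). If v belongs to (P_α(uα))*, then ‾(S_‾α(‾α‾v)) ⊆ (P_α(uα))*. -/
open List

/-!
Complementing turns `‾α‾x <:+ ‾α‾v` into `xα <+: vα`, so it suffices that `X* = (P_α(uα))*`
is closed under `α`-prefixes. Since `α` is a prefix of `uα`, it is also a prefix of `yα` for
every `y ∈ X`; hence in a factorisation `v = y₁ ⋯ yₙ` over `X` each `yᵢ` is followed by an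
occurrence of `α`. An `α`-prefix `x` of `vα` therefore either is an `α`-prefix of `y₁α`, hence
lies in `X`, or begins with `y₁`, and we recurse on the rest.
-/

namespace Hairpin

variable {S : Type}

section Star

variable {X : Set (List S)}

lemma nil_mem_star : ([] : List S) ∈ star X := ⟨[], by simp, rfl⟩

lemma mem_star_of_mem {y : List S} (hy : y ∈ X) : y ∈ star X :=
  ⟨[y], by simpa using hy, by simp⟩

lemma append_mem_star {y z : List S} (hy : y ∈ X) (hz : z ∈ star X) : y ++ z ∈ star X := by
  obtain ⟨l, hl, rfl⟩ := hz
  exact ⟨y :: l, by simpa [hy] using hl, by simp⟩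

end Star

lemma prefix_append_append {a y z : List S} (hy : a <+: y ++ a) (hz : a <+: z) :
    a <+: y ++ z := by
  obtain ⟨z', rfl⟩ := hz
  obtain ⟨s, hs⟩ := hy
  exact ⟨s ++ z', by rw [← append_assoc, hs, append_assoc]⟩

lemma prefix_append_of_mem_Pa {a w y : List S} (ha : a <+: w) (hy : y ∈ Pa a w) :
    a <+: y ++ a :=
  prefix_of_prefix_length_le ha hy (by simp)

lemma mem_Pa_of_prefix {a w x y : List S} (hy : y ∈ Pa a w) (hxy : x ++ a <+: y ++ a) :
    x ∈ Pa a w :=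
  hxy.trans hy

section PrefixClosed

variable {a : List S} {X : Set (List S)}

lemma prefix_append_of_mem_star (hX : ∀ y ∈ X, a <+: y ++ a) {v : List S}
    (hv : v ∈ star X) : a <+: v ++ a := by
  obtain ⟨l, hl, rfl⟩ := hv
  induction l with
  | nil => simp
  | cons y t ih =>
    simpa only [flatten_cons, append_assoc] using
      prefix_append_append (hX y (hl y (mem_cons_self ..)))
        (ih fun z hz => hl z (mem_cons_of_mem _ hz))

lemma mem_star_of_prefix_append (hX : ∀ y ∈ X, a <+: y ++ a)
    (hXclosed : ∀ {x y}, y ∈ X → x ++ a <+: y ++ a → x ∈ X) {v x : List S}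
    (hv : v ∈ star X) (hx : x ++ a <+: v ++ a) : x ∈ star X := by
  obtain ⟨l, hl, rfl⟩ := hv
  induction l generalizing x with
  | nil =>
    have hx0 : x = [] := eq_nil_of_length_eq_zero (by simpa using hx.length_le)
    exact hx0 ▸ nil_mem_star
  | cons y t ih =>
    have hy : y ∈ X := hl y (mem_cons_self ..)
    have ht : ∀ z ∈ t, z ∈ X := fun z hz => hl z (mem_cons_of_mem _ hz)
    rw [flatten_cons, append_assoc] at hx
    by_cases hxy : x.length ≤ y.length
    · obtain ⟨r, hr⟩ := prefix_append_of_mem_star hX ⟨t, ht, rfl⟩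
      rw [← hr, ← append_assoc] at hx
      exact mem_star_of_mem <| hXclosed hy <|
        prefix_of_prefix_length_le hx (prefix_append _ _) (by simpa using hxy)
    · obtain ⟨x', rfl⟩ : y <+: x :=
        prefix_of_prefix_length_le (prefix_append _ _) ((prefix_append x a).trans hx)
          (by omega)
      rw [append_assoc] at hx
      exact append_mem_star hy (ih ht ((prefix_append_right_inj y).mp hx))

end PrefixClosed

lemma comp_append (bar : S → S) (x y : List S) :
    comp bar (x ++ y) = comp bar y ++ comp bar x := by
  simp [comp]

lemma comp_suffix_comp_iff {bar : S → S} (hbar : Function.Injective bar) {x y : List S} :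
    comp bar x <:+ comp bar y ↔ x <+: y :=
  reverse_suffix.trans (prefix_map_iff_of_injective hbar)

lemma mem_barSa_comp_iff {bar : S → S} (hbar : Function.Injective bar) {a v x : List S} :
    x ∈ barSa bar a (comp bar a ++ comp bar v) ↔ x ++ a <+: v ++ a := by
  change comp bar a ++ comp bar x <:+ comp bar a ++ comp bar v ↔ _
  rw [← comp_append, ← comp_append, comp_suffix_comp_iff hbar]

variable [DecidableEq S]

theorem stmt7_general (bar : S → S) (hbar : Function.Involutive bar)
    (a w u v : List S) (hp : a <+: w)
    (hu : u ∈ Pa a w)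
    (h1 : v ∈ star (Pa a (u ++ a))) :
    barSa bar a (comp bar a ++ comp bar v) ⊆ star (Pa a (u ++ a)) := by
  intro x hx
  have ha : a <+: u ++ a := prefix_append_of_mem_Pa hp hu
  exact mem_star_of_prefix_append (fun y => prefix_append_of_mem_Pa ha) mem_Pa_of_prefix h1
    ((mem_barSa_comp_iff hbar.injective).mp hx)

theorem stmt7 (bar : S → S) (hbar : Function.Involutive bar)
    (a w u v : List S) (hp : a <+: w) (hs : comp bar a <:+ w)
    (hu : u ∈ Pa a w) (hv : v ∈ barSa bar a w)
    (h1 : v ∈ star (Pa a (u ++ a))) :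
    barSa bar a (comp bar a ++ comp bar v) ⊆ star (Pa a (u ++ a)) :=
  stmt7_general bar hbar a w u v hp hu h1

end Hairpin
end
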